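/- arXiv:math/0601025 — 2 statements merged into one kernel-verified Lean document; each statement's English description precedes it below -/
import Mathlib

section
/- Let C be the cylinder obtained as the quotient of U = ℝ × [0,1] by the translation T(t,r) = (t+1,r), with projection π : U → C. Define R₁ ≤_ver R₂ on C iff there exist Q₁, Q₂ ∈ U with π(Qᵢ) = Rᵢ and Q₁ ≤_ver Q₂. Then ≤_ver is a partial order on C. -/
/-- The strip `U = ℝ × [0,1]`. -/
abbrev StripU : Type := ℝ × Set.Icc (0:ℝ) 1

/-- Vertical order on the strip. -/
def verRel (c : ℝ) (P Q : StripU) : Prop :=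
  c * |Q.1 - P.1| ≤ (Q.2 : ℝ) - (P.2 : ℝ)

/-- The setoid identifying points of `U` differing by an integer translation
in the `t`-coordinate (the ℤ-action generated by `T(t,r) = (t+1,r)`). -/
def cylSetoid : Setoid StripU where
  r P Q := ∃ k : ℤ, Q.1 = P.1 + k ∧ Q.2 = P.2
  iseqv := by
    refine ⟨fun P => ⟨0, by simp⟩, ?_, ?_⟩
    · rintro P Q ⟨k, h1, h2⟩
      exact ⟨-k, by push_cast; linarith, h2.symm⟩
    · rintro P Q R ⟨k, h1, h2⟩ ⟨l, h3, h4⟩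
      exact ⟨k + l, by push_cast; linarith, h4.trans h2⟩

/-- The cylinder `C = U / ⟨T⟩`. -/
abbrev CylC : Type := Quotient cylSetoid

/-- The projection `π : U → C`. -/
def piC (P : StripU) : CylC := Quotient.mk cylSetoid P

/-- The lifted vertical relation on the cylinder:
`R₁ ≤_ver R₂` iff there exist lifts `Q₁, Q₂` with `Q₁ ≤_ver Q₂`. -/
def verRelC (c : ℝ) (R₁ R₂ : CylC) : Prop :=
  ∃ Q₁ Q₂ : StripU, piC Q₁ = R₁ ∧ piC Q₂ = R₂ ∧ verRel c Q₁ Q₂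

lemma piC_shift (P : StripU) (k : ℤ) : piC (P.1 + k, P.2) = piC P := by
  exact Quotient.sound (cylSetoid.symm ⟨k, rfl, rfl⟩)

/-- the lifted relation `≤_ver` is a partial order on the cylinder. -/
theorem verRelC_isPartialOrder (c : ℝ) (hc : 0 < c) :
    IsPartialOrder CylC (verRelC c) := by
  have absle : ∀ A B : StripU, verRel c A B → (A.2 : ℝ) ≤ B.2 := by
    intro A B h
    have := abs_nonneg (B.1 - A.1)
    have : (0:ℝ) ≤ c * |B.1 - A.1| := by positivity
    unfold verRel at h; linarith
  refine @IsPartialOrder.mk _ _ (@IsPreorder.mk _ _ ⟨?_⟩ ⟨?_⟩) ⟨?_⟩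
  · -- refl
    intro R
    obtain ⟨Q, rfl⟩ := Quotient.exists_rep R
    exact ⟨Q, Q, rfl, rfl, by unfold verRel; simp⟩
  · -- trans
    rintro R₁ R₂ R₃ ⟨A, B, hA, hB, hAB⟩ ⟨B', C, hB', hC, hBC⟩
    obtain ⟨k, hk1, hk2⟩ := Quotient.exact (hB.trans hB'.symm)
    refine ⟨(A.1 + k, A.2), C, (piC_shift A k).trans hA, hC, ?_⟩
    unfold verRel at hAB hBC ⊢
    simp only
    have htri : |C.1 - (A.1 + k)| ≤ |C.1 - B'.1| + |B'.1 - (A.1 + k)| :=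
      abs_sub_le _ _ _
    have he : |B'.1 - (A.1 + k)| = |B.1 - A.1| := by rw [hk1]; ring_nf
    rw [he] at htri
    rw [hk2] at hBC
    nlinarith [abs_nonneg (C.1 - B'.1), abs_nonneg (B.1 - A.1)]
  · -- antisymm
    rintro R₁ R₂ ⟨A, B, hA, hB, hAB⟩ ⟨B', A', hB', hA', hBA⟩
    obtain ⟨k, hk1, hk2⟩ := Quotient.exact (hB.trans hB'.symm)
    obtain ⟨l, hl1, hl2⟩ := Quotient.exact (hA'.trans hA.symm)
    have h1 := absle A B hAB
    have h2 := absle B' A' hBA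
    rw [hk2, ← hl2] at h2
    have hr : (B.2 : ℝ) = (A.2 : ℝ) := le_antisymm h2 h1
    unfold verRel at hAB
    have hmul : c * |B.1 - A.1| ≤ 0 := by linarith
    have habs : |B.1 - A.1| = 0 := by
      have h0 := abs_nonneg (B.1 - A.1)
      nlinarith
    have ht : B.1 = A.1 := by have := abs_eq_zero.mp habs; linarith
    have hAB' : A = B := by
      rcases A with ⟨a1, a2⟩; rcases B with ⟨b1, b2⟩
      simp only at ht hr
      exact Prod.ext ht.symm (Subtype.ext hr).symm
    rw [← hA, ← hB, hAB']
end

section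
/- Let Q₁, Q₂ ∈ U = ℝ × [0,1] with Q₁ ≤_ver Q₂ and t(Q₁) ≤ t(Q₂). If Q₂' ∈ U satisfies π(Q₂') = π(Q₂) and Q₁ ≤_hor Q₂', then t(Q₂') ≥ t(Q₂) + 1. -/
/-- Horizontal order: `(t₁,r₁) ≤_hor (t₂,r₂)` iff `t₁ ≤ t₂`, `c(t₂−t₁) ≥ |r₂−r₁|`. -/
def horRel (c : ℝ) (P Q : ℝ × ℝ) : Prop :=
  P.1 ≤ Q.1 ∧ |Q.2 - P.2| ≤ c * (Q.1 - P.1)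

/-- if `Q₁ <_ver Q₂` (strictly, by genericity) with
`t(Q₁) ≤ t(Q₂)`, and `Q₂' = (t(Q₂)+m, r(Q₂))` is a lift of `π(Q₂)` with
`Q₁ ≤_hor Q₂'`, then `t(Q₂') ≥ t(Q₂) + 1`. -/
theorem later_request_costs_rotation (c : ℝ) (hc : 0 < c)
    (Q₁ Q₂ : ℝ × ℝ)
    (hr₁ : Q₁.2 ∈ Set.Icc (0:ℝ) 1) (hr₂ : Q₂.2 ∈ Set.Icc (0:ℝ) 1)
    (hver : c * |Q₂.1 - Q₁.1| < Q₂.2 - Q₁.2)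
    (ht : Q₁.1 ≤ Q₂.1)
    (m : ℤ) (Q₂' : ℝ × ℝ) (hQ₂' : Q₂' = (Q₂.1 + (m : ℝ), Q₂.2))
    (hhor : horRel c Q₁ Q₂') :
    Q₂.1 + 1 ≤ Q₂'.1 := by
  obtain ⟨h1, h2⟩ := hhor
  subst hQ₂'
  simp only at h1 h2
  rw [abs_of_nonneg (sub_nonneg.2 ht)] at hver
  have hpos : 0 < Q₂.2 - Q₁.2 := lt_of_le_of_lt (mul_nonneg hc.le (sub_nonneg.2 ht)) hver
  rw [abs_of_pos hpos] at h2
  have hm : c * (Q₂.1 - Q₁.1) < c * (Q₂.1 + (m : ℝ) - Q₁.1) :=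
    lt_of_lt_of_le hver h2
  have : (0:ℝ) < (m : ℝ) := by
    have := lt_of_mul_lt_mul_left (by linarith [hm] : c * (Q₂.1 - Q₁.1) < c * (Q₂.1 + (m:ℝ) - Q₁.1)) hc.le
    linarith
  have h1m : (1:ℤ) ≤ m := by exact_mod_cast Int.lt_iff_add_one_le.mp (by exact_mod_cast this : (0:ℤ) < m)
  have : (1:ℝ) ≤ (m:ℝ) := by exact_mod_cast h1m
  show Q₂.1 + 1 ≤ Q₂.1 + (m:ℝ); linarith
end
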